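/- arXiv:1509.05842 — 3 statements merged into one kernel-verified Lean document; each statement's English description precedes it below -/
import Mathlib

section
/- Structure preserving bisimilarity ≈sp is an equivalence relation on nets (i.e. on Petri nets with bounded parallelism): it is reflexive, symmetric and transitive. -/
open scoped Classical

/-- A typed Petri net over the action alphabet `Act`.  The flow relation (with arc
weights) is presented through the pre- and post-multisets of each transition. -/
structure PetriNet (Act : Type) : Type 1 where
  Plc : Type
  Tr : Type
  pre : Tr → Multiset Plc
  post : Tr → Multiset Plc
  M0 : Multiset Plc
  typ : Set Act
  lbl : Tr → Act
  lbl_mem : ∀ t, lbl t ∈ typ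

namespace PetriNet

variable {Act : Type}

/-- `M [t⟩ M'`: transition `t` is enabled at the marking `M` and firing it yields `M'`. -/
def fires (N : PetriNet Act) (M : Multiset N.Plc) (t : N.Tr) (M' : Multiset N.Plc) : Prop :=
  N.pre t ≤ M ∧ M' = M - N.pre t + N.post t

/-- The markings reachable from the initial marking (i.e. occurring in some path). -/
inductive Reachable (N : PetriNet Act) : Multiset N.Plc → Prop
  | init : Reachable N N.M0
  | step {M : Multiset N.Plc} {t : N.Tr} {M' : Multiset N.Plc} :
      Reachable N M → N.fires M t M' → Reachable N M'

/-- Bounded parallelism: no reachable marking `M` admits an infinite multiset `U` of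
transitions with `∑_{t ∈ U} •t ≤ M`. -/
def BoundedParallelism (N : PetriNet Act) : Prop :=
  ¬ ∃ (M : Multiset N.Plc) (U : N.Tr → ℕ), N.Reachable M ∧
      (Function.support U).Infinite ∧
      ∀ F : Finset N.Tr, (∑ t ∈ F, U t • N.pre t) ≤ M

/-- A net is safe if every reachable marking is a plain set. -/
def Safe (N : PetriNet Act) : Prop := ∀ M, N.Reachable M → M.Nodup

end PetriNet

/-- A linking between two nets: a multiset of links, i.e. of pairs of places. -/
abbrev Linking {Act : Type} (N₁ N₂ : PetriNet Act) : Type := Multiset (N₁.Plc × N₂.Plc)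

/-- First projection of a linking: the induced marking of the first net. -/
def Linking.proj1 {Act : Type} {N₁ N₂ : PetriNet Act} (l : Linking N₁ N₂) :
    Multiset N₁.Plc := l.map Prod.fst

/-- Second projection of a linking: the induced marking of the second net. -/
def Linking.proj2 {Act : Type} {N₁ N₂ : PetriNet Act} (l : Linking N₁ N₂) :
    Multiset N₂.Plc := l.map Prod.snd

/-- `B` is a structure preserving bisimulation between `N₁` and `N₂`. -/
def IsSPBisim {Act : Type} (N₁ N₂ : PetriNet Act) (B : Set (Linking N₁ N₂)) : Prop :=
  (∀ c l : Linking N₁ N₂, l ∈ B → c ≤ l → ∀ t₁ : N₁.Tr, c.proj1 = N₁.pre t₁ →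
      ∃ t₂ : N₂.Tr, N₂.lbl t₂ = N₁.lbl t₁ ∧ c.proj2 = N₂.pre t₂ ∧
        ∃ cbar : Linking N₁ N₂, cbar.proj1 = N₁.post t₁ ∧ cbar.proj2 = N₂.post t₂ ∧
          l - c + cbar ∈ B) ∧
  (∀ c l : Linking N₁ N₂, l ∈ B → c ≤ l → ∀ t₂ : N₂.Tr, c.proj2 = N₂.pre t₂ →
      ∃ t₁ : N₁.Tr, N₁.lbl t₁ = N₂.lbl t₂ ∧ c.proj1 = N₁.pre t₁ ∧
        ∃ cbar : Linking N₁ N₂, cbar.proj1 = N₁.post t₁ ∧ cbar.proj2 = N₂.post t₂ ∧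
          l - c + cbar ∈ B)

/-- Structure preserving bisimilarity `N₁ ≈sp N₂`. -/
def SPBisimilar {Act : Type} (N₁ N₂ : PetriNet Act) : Prop :=
  N₁.typ = N₂.typ ∧ ∃ B : Set (Linking N₁ N₂), IsSPBisim N₁ N₂ B ∧
    ∃ l ∈ B, l.proj1 = N₁.M0 ∧ l.proj2 = N₂.M0

/-!
A structure preserving bisimulation is a simulation in each direction, the backward one
being the forward condition for the swapped linkings; so only forward simulations need to
be handled. Reflexivity is witnessed by the linkings that link every place to itself,
symmetry by swapping every link. For transitivity, two bisimulations are composed through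
multisets of triples of places: a pre-linking of the composite lifts to a sub-multiset of
triples, the two matching steps are taken one after the other, and the two resulting
post-linkings, which agree on the middle net, are glued again into triples.
-/

namespace Multiset

variable {α β γ : Type*}

theorem map_sub_of_le [DecidableEq α] [DecidableEq β] (f : α → β) {s t : Multiset α}
    (h : t ≤ s) : (s - t).map f = s.map f - t.map f := by
  obtain ⟨u, rfl⟩ := le_iff_exists_add.mp h
  simp

theorem exists_le_map_eq_of_le_map {f : α → β} {s : Multiset β} {t : Multiset α}
    (h : s ≤ t.map f) : ∃ u ≤ t, u.map f = s := by
  induction s using Multiset.induction generalizing t with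
  | empty => exact ⟨0, zero_le _, map_zero f⟩
  | cons b s ih =>
    obtain ⟨a, ha, rfl⟩ := mem_map.mp (mem_of_le h (mem_cons_self _ _))
    rw [← cons_erase ha, map_cons, cons_le_cons_iff] at h
    obtain ⟨u, hu, rfl⟩ := ih h
    exact ⟨a ::ₘ u, (cons_le_cons a hu).trans_eq (cons_erase ha), map_cons f a u⟩

theorem exists_map_eq_of_map_snd_eq_map_fst {a : Multiset (α × β)} {b : Multiset (β × γ)}
    (h : a.map Prod.snd = b.map Prod.fst) :
    ∃ m : Multiset (α × β × γ), m.map (fun x => (x.1, x.2.1)) = a ∧ m.map Prod.snd = b := by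
  induction a using Multiset.induction generalizing b with
  | empty =>
    rw [map_zero, eq_comm, map_eq_zero] at h
    exact ⟨0, map_zero _, h ▸ map_zero _⟩
  | cons p a ih =>
    obtain ⟨q, hq, hpq⟩ := mem_map.mp (h ▸ mem_map_of_mem Prod.snd (mem_cons_self p a))
    rw [← cons_erase hq, map_cons, map_cons, hpq, cons_inj_right] at h
    obtain ⟨m, rfl, hm⟩ := ih h
    refine ⟨(p.1, q) ::ₘ m, by simp [hpq], ?_⟩
    rw [map_cons, hm, cons_erase hq]

end Multiset

def diagLinkings {Act : Type} (N : PetriNet Act) : Set (Linking N N) :=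
  {l | ∀ p ∈ l, p.1 = p.2}

namespace Linking

variable {Act : Type} {N N₁ N₂ : PetriNet Act}

def swap (l : Linking N₁ N₂) : Linking N₂ N₁ := l.map Prod.swap

@[simp]
theorem swap_swap (l : Linking N₁ N₂) : l.swap.swap = l := by
  simp [swap, Multiset.map_map]

@[simp]
theorem proj1_swap (l : Linking N₁ N₂) : l.swap.proj1 = l.proj2 := by
  simp [swap, proj1, proj2, Multiset.map_map]

@[simp]
theorem proj2_swap (l : Linking N₁ N₂) : l.swap.proj2 = l.proj1 := by
  simp [swap, proj1, proj2, Multiset.map_map]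

@[simp]
theorem swap_le_swap {c l : Linking N₁ N₂} : c.swap ≤ l.swap ↔ c ≤ l :=
  Multiset.map_le_map_iff Prod.swap_injective

theorem swap_sub_add {c l : Linking N₁ N₂} (h : c ≤ l) (cbar : Linking N₁ N₂) :
    (l - c + cbar).swap = l.swap - c.swap + cbar.swap := by
  rw [swap, Multiset.map_add, Multiset.map_sub_of_le _ h]
  rfl

def diag (M : Multiset N.Plc) : Linking N N := M.map fun s => (s, s)

@[simp]
theorem proj1_diag (M : Multiset N.Plc) : (diag M).proj1 = M := by
  simp [diag, proj1, Multiset.map_map]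

@[simp]
theorem proj2_diag (M : Multiset N.Plc) : (diag M).proj2 = M := by
  simp [diag, proj2, Multiset.map_map]

theorem diag_mem_diagLinkings (M : Multiset N.Plc) :
    diag M ∈ diagLinkings N :=
  Multiset.forall_mem_map_iff.mpr fun _ _ => rfl

end Linking

section SPBisimilar

variable {Act : Type} {N₁ N₂ N₃ : PetriNet Act}

def IsSPSim (N₁ N₂ : PetriNet Act) (B : Set (Linking N₁ N₂)) : Prop :=
  ∀ c l : Linking N₁ N₂, l ∈ B → c ≤ l → ∀ t₁ : N₁.Tr, c.proj1 = N₁.pre t₁ →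
    ∃ t₂ : N₂.Tr, N₂.lbl t₂ = N₁.lbl t₁ ∧ c.proj2 = N₂.pre t₂ ∧
      ∃ cbar : Linking N₁ N₂, cbar.proj1 = N₁.post t₁ ∧ cbar.proj2 = N₂.post t₂ ∧
        l - c + cbar ∈ B

theorem isSPSim_swap_preimage_iff {B : Set (Linking N₁ N₂)} :
    IsSPSim N₂ N₁ (Linking.swap ⁻¹' B) ↔
      ∀ c l : Linking N₁ N₂, l ∈ B → c ≤ l → ∀ t₂ : N₂.Tr, c.proj2 = N₂.pre t₂ →
        ∃ t₁ : N₁.Tr, N₁.lbl t₁ = N₂.lbl t₂ ∧ c.proj1 = N₁.pre t₁ ∧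
          ∃ cbar : Linking N₁ N₂, cbar.proj1 = N₁.post t₁ ∧ cbar.proj2 = N₂.post t₂ ∧
            l - c + cbar ∈ B := by
  constructor
  · intro h c l hl hcl t₂ hc
    obtain ⟨t₁, hlbl, hc₁, cbar, hpost₂, hpost₁, hmem⟩ :=
      h c.swap l.swap (by simpa) (by simpa) t₂ (by simpa)
    refine ⟨t₁, hlbl, by simpa using hc₁, cbar.swap, by simpa, by simpa, ?_⟩
    simpa [Linking.swap_sub_add (Linking.swap_le_swap.mpr hcl)] using hmem
  · intro h c l hl hcl t₂ hc
    obtain ⟨t₁, hlbl, hc₁, cbar, hpost₁, hpost₂, hmem⟩ :=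
      h c.swap l.swap hl (by simpa) t₂ (by simpa)
    refine ⟨t₁, hlbl, by simpa using hc₁, cbar.swap, by simpa, by simpa, ?_⟩
    simpa [Set.mem_preimage, Linking.swap_sub_add hcl] using hmem

theorem isSPBisim_iff {B : Set (Linking N₁ N₂)} :
    IsSPBisim N₁ N₂ B ↔ IsSPSim N₁ N₂ B ∧ IsSPSim N₂ N₁ (Linking.swap ⁻¹' B) := by
  rw [isSPSim_swap_preimage_iff]; rfl

theorem IsSPBisim.swap_preimage {B : Set (Linking N₁ N₂)} (h : IsSPBisim N₁ N₂ B) :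
    IsSPBisim N₂ N₁ (Linking.swap ⁻¹' B) := by
  rw [isSPBisim_iff] at h ⊢
  rw [Set.preimage_preimage]
  simpa using h.symm

theorem SPBisimilar.symm (h : SPBisimilar N₁ N₂) : SPBisimilar N₂ N₁ := by
  obtain ⟨htyp, B, hB, l, hl, hl₁, hl₂⟩ := h
  refine ⟨htyp.symm, _, hB.swap_preimage, l.swap, ?_, by simpa, by simpa⟩
  simpa using hl

theorem proj1_eq_proj2_of_mem_diagLinkings {N : PetriNet Act} {l : Linking N N}
    (hl : l ∈ diagLinkings N) : l.proj1 = l.proj2 :=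
  Multiset.map_congr rfl hl

theorem isSPSim_diagLinkings (N : PetriNet Act) : IsSPSim N N (diagLinkings N) := by
  intro c l hl hcl t hc
  have hcdiag : c ∈ diagLinkings N := fun p hp => hl p (Multiset.mem_of_le hcl hp)
  refine ⟨t, rfl, proj1_eq_proj2_of_mem_diagLinkings hcdiag ▸ hc, Linking.diag (N.post t),
    Linking.proj1_diag _, Linking.proj2_diag _, fun p hp => ?_⟩
  rcases Multiset.mem_add.mp hp with hp | hp
  · exact hl p (Multiset.mem_of_le (Multiset.sub_le_self l c) hp)
  · exact Linking.diag_mem_diagLinkings _ p hp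

theorem swap_preimage_diagLinkings (N : PetriNet Act) :
    Linking.swap ⁻¹' diagLinkings N = diagLinkings N := by
  ext l
  simp only [Set.mem_preimage, diagLinkings, Set.mem_ofPred_eq, Linking.swap,
    Multiset.forall_mem_map_iff]
  exact forall_congr' fun p => imp_congr_right fun _ => eq_comm

theorem SPBisimilar.refl (N : PetriNet Act) : SPBisimilar N N := by
  refine ⟨rfl, diagLinkings N, ?_, Linking.diag N.M0, Linking.diag_mem_diagLinkings _,
    Linking.proj1_diag _, Linking.proj2_diag _⟩
  rw [isSPBisim_iff, swap_preimage_diagLinkings]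
  exact ⟨isSPSim_diagLinkings N, isSPSim_diagLinkings N⟩

/-- Composition of sets of linkings: the middle places are kept in a multiset of triples,
since a linking is not determined by its two projections. -/
def compLinkings (B₁₂ : Set (Linking N₁ N₂)) (B₂₃ : Set (Linking N₂ N₃)) :
    Set (Linking N₁ N₃) :=
  {l | ∃ m : Multiset (N₁.Plc × N₂.Plc × N₃.Plc), m.map (fun x => (x.1, x.2.1)) ∈ B₁₂ ∧
    m.map Prod.snd ∈ B₂₃ ∧ m.map (fun x => (x.1, x.2.2)) = l}

theorem IsSPSim.comp {B₁₂ : Set (Linking N₁ N₂)} {B₂₃ : Set (Linking N₂ N₃)}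
    (h₁₂ : IsSPSim N₁ N₂ B₁₂) (h₂₃ : IsSPSim N₂ N₃ B₂₃) :
    IsSPSim N₁ N₃ (compLinkings B₁₂ B₂₃) := by
  rintro c _ ⟨m, hm₁₂, hm₂₃, rfl⟩ hcm t₁ hc
  obtain ⟨d, hdm, rfl⟩ := Multiset.exists_le_map_eq_of_le_map hcm
  obtain ⟨t₂, hlbl₂, hd₂, cbar₁₂, hpost₁, hpost₂, hmem₁₂⟩ :=
    h₁₂ _ _ hm₁₂ (Multiset.map_le_map hdm) t₁
      (by rw [← hc]; simp [Linking.proj1, Multiset.map_map])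
  obtain ⟨t₃, hlbl₃, hd₃, cbar₂₃, hpost₂', hpost₃, hmem₂₃⟩ :=
    h₂₃ _ _ hm₂₃ (Multiset.map_le_map hdm) t₂
      (by rw [← hd₂]; simp [Linking.proj1, Linking.proj2, Multiset.map_map])
  obtain ⟨mbar, rfl, rfl⟩ :=
    Multiset.exists_map_eq_of_map_snd_eq_map_fst (hpost₂.trans hpost₂'.symm)
  refine ⟨t₃, hlbl₃.trans hlbl₂,
    by rw [← hd₃]; simp [Linking.proj2, Multiset.map_map],
    mbar.map fun x => (x.1, x.2.2),
    by rw [← hpost₁]; simp [Linking.proj1, Multiset.map_map],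
    by rw [← hpost₃]; simp [Linking.proj2, Multiset.map_map],
    m - d + mbar, ?_, ?_, ?_⟩
  all_goals simp only [Multiset.map_add, Multiset.map_sub_of_le _ hdm]
  exacts [hmem₁₂, hmem₂₃]

theorem swap_preimage_compLinkings (B₁₂ : Set (Linking N₁ N₂)) (B₂₃ : Set (Linking N₂ N₃)) :
    Linking.swap ⁻¹' compLinkings B₁₂ B₂₃ =
      compLinkings (Linking.swap ⁻¹' B₂₃) (Linking.swap ⁻¹' B₁₂) := by
  ext l
  constructor
  · rintro ⟨m, hm₁₂, hm₂₃, hl⟩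
    refine ⟨m.map fun x => (x.2.2, x.2.1, x.1), ?_, ?_, ?_⟩
    · simpa [Linking.swap, Prod.swap, Multiset.map_map, Function.comp_def] using hm₂₃
    · simpa [Linking.swap, Prod.swap, Multiset.map_map, Function.comp_def] using hm₁₂
    · rw [← l.swap_swap, ← hl]
      simp [Linking.swap, Multiset.map_map]
  · rintro ⟨m, hm₃₂, hm₂₁, rfl⟩
    refine ⟨m.map fun x => (x.2.2, x.2.1, x.1), ?_, ?_, ?_⟩
    · simpa [Linking.swap, Prod.swap, Multiset.map_map, Function.comp_def] using hm₂₁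
    · simpa [Linking.swap, Prod.swap, Multiset.map_map, Function.comp_def] using hm₃₂
    · simp [Linking.swap, Multiset.map_map]

theorem IsSPBisim.comp {B₁₂ : Set (Linking N₁ N₂)} {B₂₃ : Set (Linking N₂ N₃)}
    (h₁₂ : IsSPBisim N₁ N₂ B₁₂) (h₂₃ : IsSPBisim N₂ N₃ B₂₃) :
    IsSPBisim N₁ N₃ (compLinkings B₁₂ B₂₃) := by
  rw [isSPBisim_iff] at h₁₂ h₂₃ ⊢
  rw [swap_preimage_compLinkings]
  exact ⟨h₁₂.1.comp h₂₃.1, h₂₃.2.comp h₁₂.2⟩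

theorem SPBisimilar.trans (h₁₂ : SPBisimilar N₁ N₂) (h₂₃ : SPBisimilar N₂ N₃) :
    SPBisimilar N₁ N₃ := by
  obtain ⟨htyp₁₂, B₁₂, hB₁₂, l₁₂, hl₁₂, hl₁₂₁, hl₁₂₂⟩ := h₁₂
  obtain ⟨htyp₂₃, B₂₃, hB₂₃, l₂₃, hl₂₃, hl₂₃₂, hl₂₃₃⟩ := h₂₃
  obtain ⟨m, rfl, rfl⟩ := Multiset.exists_map_eq_of_map_snd_eq_map_fst (hl₁₂₂.trans hl₂₃₂.symm)
  refine ⟨htyp₁₂.trans htyp₂₃, _, hB₁₂.comp hB₂₃, _, ⟨m, hl₁₂, hl₂₃, rfl⟩, ?_, ?_⟩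
  · rw [← hl₁₂₁]; simp [Linking.proj1, Multiset.map_map]
  · rw [← hl₂₃₃]; simp [Linking.proj2, Multiset.map_map]

end SPBisimilar

/-- Structure preserving bisimilarity is an equivalence relation on nets
(Petri nets with bounded parallelism). -/
theorem spBisimilar_equivalence (Act : Type) :
    Equivalence (fun N₁ N₂ : {N : PetriNet Act // N.BoundedParallelism} =>
      SPBisimilar N₁.val N₂.val) :=
  ⟨fun N => SPBisimilar.refl N.val, SPBisimilar.symm, SPBisimilar.trans⟩
end

section
/- Structure preserving bisimilarity is a congruence for relational renaming: if N₁ ≈sp N₂ and R ⊆ Act × Act, then R_𝒩(N₁) ≈sp R_𝒩(N₂). -/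
open scoped Classical

/-- The relational renaming `R_𝒩(N)`: same places and initial marking; a transition
`t_b` for each transition `t` of `N` and `b` with `(ℓ(t), b) ∈ R`. -/
def renameNet {Act : Type} (R : Set (Act × Act)) (N : PetriNet Act) : PetriNet Act where
  Plc := N.Plc
  Tr := {p : N.Tr × Act // (N.lbl p.1, p.2) ∈ R}
  pre := fun t => N.pre t.val.1
  post := fun t => N.post t.val.1
  M0 := N.M0
  typ := {b : Act | ∃ a ∈ N.typ, (a, b) ∈ R}
  lbl := fun t => t.val.2
  lbl_mem := fun t => ⟨N.lbl t.val.1, N.lbl_mem t.val.1, t.property⟩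

/-- Renaming keeps the places, so `B` is also a set of linkings of the renamed nets; a renamed
transition `t_b` is answered by `u_b`, where `u` answers `t` in `B`. -/
theorem IsSPBisim.renameNet {Act : Type} {N₁ N₂ : PetriNet Act} {B : Set (Linking N₁ N₂)}
    (hB : IsSPBisim N₁ N₂ B) (R : Set (Act × Act)) :
    IsSPBisim (renameNet R N₁) (renameNet R N₂) B := by
  obtain ⟨hB₁, hB₂⟩ := hB
  constructor
  · rintro c l hl hcl ⟨⟨t₁, b⟩, hb⟩ hpre₁
    obtain ⟨t₂, hlbl, hpre₂, cbar, hpost₁, hpost₂, hmem⟩ := hB₁ c l hl hcl t₁ hpre₁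
    exact ⟨⟨⟨t₂, b⟩, hlbl ▸ hb⟩, rfl, hpre₂, cbar, hpost₁, hpost₂, hmem⟩
  · rintro c l hl hcl ⟨⟨t₂, b⟩, hb⟩ hpre₂
    obtain ⟨t₁, hlbl, hpre₁, cbar, hpost₁, hpost₂, hmem⟩ := hB₂ c l hl hcl t₂ hpre₂
    exact ⟨⟨⟨t₁, b⟩, hlbl ▸ hb⟩, rfl, hpre₁, cbar, hpost₁, hpost₂, hmem⟩

theorem spBisimilar_congr_rename_general {Act : Type} (N₁ N₂ : PetriNet Act)
    (R : Set (Act × Act))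
    (h : SPBisimilar N₁ N₂) :
    SPBisimilar (renameNet R N₁) (renameNet R N₂) := by
  obtain ⟨htyp, B, hB, l, hl, hl₁, hl₂⟩ := h
  exact ⟨by simp only [renameNet, htyp], B, hB.renameNet R, l, hl, hl₁, hl₂⟩

/-- Structure preserving bisimilarity is a congruence for relational renaming. -/
theorem spBisimilar_congr_rename {Act : Type} (N₁ N₂ : PetriNet Act)
    (h₁ : N₁.BoundedParallelism) (h₂ : N₂.BoundedParallelism) (R : Set (Act × Act))
    (h : SPBisimilar N₁ N₂) :
    SPBisimilar (renameNet R N₁) (renameNet R N₂) :=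
  spBisimilar_congr_rename_general N₁ N₂ R h
end

section
/- In a causal net with bounded parallelism, for every i ∈ ℕ the set of transitions of depth at most i is finite, where the depth of a transition u is one more than the maximum of the depths of all transitions t with (t,u) ∈ 𝔽⁺. -/
open scoped Classical

/-- The flow relation of a net, as a relation on `Plc ⊕ Tr`. -/
def PetriNet.flowRel {Act : Type} (N : PetriNet Act) :
    (N.Plc ⊕ N.Tr) → (N.Plc ⊕ N.Tr) → Prop
  | Sum.inl s, Sum.inr t => s ∈ N.pre t
  | Sum.inr t, Sum.inl s => s ∈ N.post t
  | _, _ => False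

/-- A causal net: a net (with bounded parallelism) in which every place has at most one
pre- and one posttransition (`|•s| ≤ 1 ≥ |s•|`), the initial marking consists of exactly
the places without pretransition (with multiplicity 1), the flow relation is acyclic,
and every transition has only finitely many causal predecessors. -/
def IsCausalNet {Act : Type} (C : PetriNet Act) : Prop :=
  C.BoundedParallelism ∧
  (∀ t : C.Tr, (C.pre t).Nodup) ∧
  (∀ t : C.Tr, (C.post t).Nodup) ∧
  (∀ (s : C.Plc) (t t' : C.Tr), s ∈ C.pre t → s ∈ C.pre t' → t = t') ∧
  (∀ (s : C.Plc) (t t' : C.Tr), s ∈ C.post t → s ∈ C.post t' → t = t') ∧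
  C.M0.Nodup ∧
  (∀ s : C.Plc, s ∈ C.M0 ↔ ∀ t : C.Tr, s ∉ C.post t) ∧
  (∀ x, ¬ Relation.TransGen C.flowRel x x) ∧
  (∀ u : C.Tr, {t : C.Tr | Relation.TransGen C.flowRel (Sum.inr t) (Sum.inr u)}.Finite)

/-- `depthLE C i u` states that the depth of the transition `u` is at most `i`, where
the depth of `u` is one more than the maximum of the depths of all transitions `t` with
`(t, u) ∈ 𝔽⁺`. -/
def depthLE {Act : Type} (C : PetriNet Act) : ℕ → C.Tr → Prop
  | 0, _ => False
  | i + 1, u => ∀ t : C.Tr,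
      Relation.TransGen C.flowRel (Sum.inr t) (Sum.inr u) → depthLE C i t

/-! The transitions of depth at most `i` form a finite downward closed set `F`, and firing them
in a causal order reaches the marking `M₀ + ∑_F t• − ∑_F •t`. A transition of depth exactly
`i + 1` lies outside `F` but has all its causal predecessors in `F`, so its preset is contained
in that marking; and the presets of different transitions are disjoint, since a place has at
most one posttransition. Bounded parallelism therefore allows only finitely many of them. -/

namespace PetriNet

variable {Act : Type} (N : PetriNet Act)

def Precedes (t u : N.Tr) : Prop :=
  Relation.TransGen N.flowRel (Sum.inr t) (Sum.inr u)

def IsDownClosed (F : Finset N.Tr) : Prop :=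
  ∀ u ∈ F, ∀ t, N.Precedes t u → t ∈ F

/-- Because of truncated subtraction this is the marking reached by firing `F` only when
`∑ •t ≤ M₀ + ∑ t•`, which holds for downward closed `F` (`IsCausalNet.sum_pre_le`). -/
noncomputable def markingAfter (F : Finset N.Tr) : Multiset N.Plc :=
  N.M0 + ∑ t ∈ F, N.post t - ∑ t ∈ F, N.pre t

variable {N}

theorem precedes_of_mem_post_of_mem_pre {s : N.Plc} {t u : N.Tr} (ht : s ∈ N.post t)
    (hu : s ∈ N.pre u) : N.Precedes t u :=
  Relation.TransGen.head (b := Sum.inl s) ht (Relation.TransGen.single hu)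

theorem IsDownClosed.mem_erase_of_precedes {F : Finset N.Tr} (hF : N.IsDownClosed F)
    {t : N.Tr} (hmax : ∀ u ∈ F, ¬ N.Precedes t u) {u v : N.Tr} (hu : u ∈ F)
    (hvu : N.Precedes v u) : v ∈ F.erase t := by
  refine Finset.mem_erase.2 ⟨?_, hF u hu v hvu⟩
  rintro rfl
  exact hmax u hu hvu

theorem IsDownClosed.erase {F : Finset N.Tr} (hF : N.IsDownClosed F) {t : N.Tr}
    (hmax : ∀ u ∈ F, ¬ N.Precedes t u) : N.IsDownClosed (F.erase t) :=
  fun _ hu _ hvu => hF.mem_erase_of_precedes hmax (Finset.mem_of_mem_erase hu) hvu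

theorem BoundedParallelism.finite_of_sum_pre_le (hN : N.BoundedParallelism)
    {M : Multiset N.Plc} (hM : N.Reachable M) {S : Set N.Tr}
    (hS : ∀ G : Finset N.Tr, ↑G ⊆ S → ∑ t ∈ G, N.pre t ≤ M) : S.Finite := by
  by_contra hinf
  refine hN ⟨M, S.indicator 1, hM, by rwa [Set.support_indicator, Function.support_one,
    Set.inter_univ], fun F => ?_⟩
  have hsum : ∑ t ∈ F, S.indicator (1 : N.Tr → ℕ) t • N.pre t =
      ∑ t ∈ F.filter (· ∈ S), N.pre t := by
    rw [Finset.sum_filter]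
    refine Finset.sum_congr rfl fun t _ => ?_
    by_cases ht : t ∈ S <;> simp [ht]
  rw [hsum]
  exact hS _ fun t ht => (Finset.mem_filter.1 ht).2

end PetriNet

namespace IsCausalNet

open PetriNet

variable {Act : Type} {C : PetriNet Act}

theorem mem_M0_or_exists_precedes (hC : IsCausalNet C) {s : C.Plc} {u : C.Tr}
    (hs : s ∈ C.pre u) : s ∈ C.M0 ∨ ∃ t, s ∈ C.post t ∧ C.Precedes t u := by
  obtain ⟨-, -, -, -, -, -, hM0, -, -⟩ := hC
  by_cases hsM0 : s ∈ C.M0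
  · exact Or.inl hsM0
  · obtain ⟨t, ht⟩ : ∃ t, s ∈ C.post t := by simpa using mt (hM0 s).2 hsM0
    exact Or.inr ⟨t, ht, precedes_of_mem_post_of_mem_pre ht hs⟩

theorem nodup_sum_pre (hC : IsCausalNet C) (H : Finset C.Tr) :
    (∑ t ∈ H, C.pre t).Nodup := by
  obtain ⟨-, hnodup, -, hconsumer, -⟩ := hC
  refine Multiset.nodup_bind.2 ⟨fun t _ => hnodup t, ?_⟩
  refine H.nodup.pairwise fun t _ u _ htu => Multiset.disjoint_left.2 fun ht hu => ?_
  exact htu (hconsumer _ t u ht hu)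

/-- The presets in `H` are pairwise disjoint sets (`nodup_sum_pre`), so it suffices that each
consumed place is initially marked or produced in `F`. -/
theorem sum_pre_le (hC : IsCausalNet C) {F H : Finset C.Tr}
    (hpred : ∀ u ∈ H, ∀ t, C.Precedes t u → t ∈ F) :
    ∑ t ∈ H, C.pre t ≤ C.M0 + ∑ t ∈ F, C.post t := by
  refine (Multiset.le_iff_subset (hC.nodup_sum_pre H)).2 fun s hs => ?_
  obtain ⟨u, huH, hsu⟩ := Multiset.mem_sum.1 hs
  rcases hC.mem_M0_or_exists_precedes hsu with hM0 | ⟨t, hst, htu⟩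
  · exact Multiset.mem_add.2 (Or.inl hM0)
  · exact Multiset.mem_add.2 (Or.inr (Multiset.mem_sum.2 ⟨t, hpred u huH t htu, hst⟩))

theorem sum_pre_le_markingAfter (hC : IsCausalNet C) {F G : Finset C.Tr}
    (hF : C.IsDownClosed F) (hFG : Disjoint F G)
    (hG : ∀ u ∈ G, ∀ t, C.Precedes t u → t ∈ F) :
    ∑ t ∈ G, C.pre t ≤ C.markingAfter F := by
  have hle : ∑ t ∈ F ∪ G, C.pre t ≤ C.M0 + ∑ t ∈ F, C.post t :=
    hC.sum_pre_le fun u hu => (Finset.mem_union.1 hu).elim (hF u) (hG u)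
  rw [Finset.sum_union hFG] at hle
  exact le_tsub_of_add_le_left hle

theorem exists_maximal (hC : IsCausalNet C) {F : Finset C.Tr} (hF : F.Nonempty) :
    ∃ t ∈ F, ∀ u ∈ F, ¬ C.Precedes t u := by
  obtain ⟨-, -, -, -, -, -, -, hacyclic, -⟩ := hC
  -- a transition with the most predecessors in `F` has no successor in `F`
  obtain ⟨t, htF, hmost⟩ := F.exists_max_image (fun t => (F.filter (C.Precedes · t)).card) hF
  refine ⟨t, htF, fun u huF htu => (hmost u huF).not_gt (Finset.card_lt_card ⟨?_, ?_⟩)⟩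
  · intro v hv
    simp only [Finset.mem_filter] at hv ⊢
    exact ⟨hv.1, hv.2.trans htu⟩
  · intro hsub
    exact hacyclic _ (Finset.mem_filter.1 (hsub (Finset.mem_filter.2 ⟨htF, htu⟩))).2

theorem fires_markingAfter_erase (hC : IsCausalNet C) {F : Finset C.Tr}
    (hF : C.IsDownClosed F) {t : C.Tr} (htF : t ∈ F) (hmax : ∀ u ∈ F, ¬ C.Precedes t u) :
    C.fires (C.markingAfter (F.erase t)) t (C.markingAfter F) := by
  have hle : ∑ u ∈ F.erase t, C.pre u + C.pre t ≤ C.M0 + ∑ u ∈ F.erase t, C.post u := by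
    rw [Finset.sum_erase_add F C.pre htF]
    exact hC.sum_pre_le fun _ hu _ hvu => hF.mem_erase_of_precedes hmax hu hvu
  refine ⟨le_tsub_of_add_le_left hle, ?_⟩
  rw [markingAfter, markingAfter, tsub_tsub, tsub_add_eq_add_tsub hle,
    ← Finset.sum_erase_add F C.pre htF, ← Finset.sum_erase_add F C.post htF, add_assoc]

theorem reachable_markingAfter (hC : IsCausalNet C) {F : Finset C.Tr}
    (hF : C.IsDownClosed F) : C.Reachable (C.markingAfter F) := by
  induction F using Finset.strongInduction with
  | H F ih =>
    rcases F.eq_empty_or_nonempty with rfl | hne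
    · simpa [markingAfter] using Reachable.init
    · obtain ⟨t, htF, hmax⟩ := hC.exists_maximal hne
      exact (ih _ (Finset.erase_ssubset htF) (hF.erase hmax)).step
        (hC.fires_markingAfter_erase hF htF hmax)

end IsCausalNet

theorem depthLE_succ_of_depthLE {Act : Type} {C : PetriNet Act} :
    ∀ {i : ℕ} {u : C.Tr}, depthLE C i u → depthLE C (i + 1) u
  | _ + 1, _, hu => fun t htu => depthLE_succ_of_depthLE (hu t htu)

theorem depthLE_of_precedes {Act : Type} {C : PetriNet Act} {i : ℕ} {t u : C.Tr}
    (hu : depthLE C i u) (htu : C.Precedes t u) : depthLE C i t := by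
  cases i with
  | zero => exact hu.elim
  | succ i => exact depthLE_succ_of_depthLE (hu t htu)

/-- In a causal net (a net, hence with bounded parallelism), for every `i` the set of
transitions of depth at most `i` is finite. -/
theorem causalNet_depth_finite {Act : Type} (C : PetriNet Act) (hC : IsCausalNet C)
    (i : ℕ) : {t : C.Tr | depthLE C i t}.Finite := by
  induction i with
  | zero => simp [depthLE]
  | succ i ih =>
    have hF : C.IsDownClosed ih.toFinset := fun u hu t htu => by
      simpa using depthLE_of_precedes (by simpa using hu) htu
    refine Set.Finite.of_sdiff ?_ ih
    refine hC.1.finite_of_sum_pre_le (hC.reachable_markingAfter hF) fun G hG => ?_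
    refine hC.sum_pre_le_markingAfter hF ?_ fun u hu t htu => ?_
    · refine Finset.disjoint_left.2 fun t htF htG => (hG htG).2 ?_
      simpa using htF
    · simpa using (hG hu).1 t htu
end
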